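/- arXiv:2105.12445 — 5 statements merged into one kernel-verified Lean document; each statement's English description precedes it below -/
import Mathlib

section
/- For all natural numbers m, n, k it holds that T (T n k) (T n m) = T (T k n) (T k m). In other words, the binary operation n ⋆ k := T n k on ℕ satisfies the cycle-set identity (x ⋆ y) ⋆ (x ⋆ z) = (y ⋆ x) ⋆ (y ⋆ z), so (ℕ, ⋆) is a cycle set. -/
/-- The binary operation `n ⋆ k = T n k`: `T n k = k` if `k ≤ n`, `k + 1` otherwise. -/
def T (n k : ℕ) : ℕ := if k ≤ n then k else k + 1

/- `T n` is the strictly increasing map `ℕ → ℕ` whose image misses exactly `n + 1`, i.e. a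
coface map. For `n < k`, both `T (k + 1) ∘ T n` and `T n ∘ T k` are the increasing map missing
`{n + 1, k + 2}` (the cosimplicial identity), and the cycle-set identity is this fact read
after evaluating `T n k = k + 1` and `T k n = n`. -/

theorem T_of_le {n k : ℕ} (h : k ≤ n) : T n k = k := if_pos h

theorem T_of_lt {n k : ℕ} (h : n < k) : T n k = k + 1 := if_neg (Nat.not_le.mpr h)

theorem T_succ_comp_T_of_lt {n k : ℕ} (h : n < k) (m : ℕ) : T (k + 1) (T n m) = T n (T k m) := by
  unfold T
  split_ifs <;> omega

theorem T_cycle_set_of_lt {n k : ℕ} (h : n < k) (m : ℕ) :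
    T (T n k) (T n m) = T (T k n) (T k m) := by
  rw [T_of_lt h, T_of_le h.le, T_succ_comp_T_of_lt h]

/-- The cycle-set identity `(x ⋆ y) ⋆ (x ⋆ z) = (y ⋆ x) ⋆ (y ⋆ z)` for `(ℕ, ⋆)`. -/
theorem T_cycle_set (m n k : ℕ) :
    T (T n k) (T n m) = T (T k n) (T k m) := by
  rcases lt_trichotomy n k with h | rfl | h
  · exact T_cycle_set_of_lt h m
  · rfl
  · exact (T_cycle_set_of_lt h m).symm
end

section
/- For every natural number n, the map T n : ℕ → ℕ is injective, its range is exactly {k : ℕ | k ≠ n + 1}, and T n n = n. Consequently the cycle set (ℕ, ⋆) with n ⋆ k = T n k is non-degenerate and square-free. -/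
namespace T

variable {n k : ℕ}

theorem of_le (h : k ≤ n) : T n k = k := if_pos h

theorem of_lt (h : n < k) : T n k = k + 1 := if_neg h.not_ge

theorem self (n : ℕ) : T n n = n := of_le le_rfl

theorem strictMono (n : ℕ) : StrictMono (T n) := by
  intro a b hab
  unfold T
  split_ifs <;> omega

theorem ne_succ (n k : ℕ) : T n k ≠ n + 1 := by
  unfold T
  split_ifs <;> omega

theorem range_eq (n : ℕ) : Set.range (T n) = {k | k ≠ n + 1} := by
  refine Set.Subset.antisymm (Set.range_subset_iff.2 (ne_succ n)) fun k (hk : k ≠ n + 1) => ?_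
  rcases le_or_gt k n with hkn | hnk
  · exact ⟨k, of_le hkn⟩
  · exact ⟨k - 1, by rw [of_lt (by omega)]; omega⟩

end T

/-- For each `n`, `T n` is injective with range `{k | k ≠ n + 1}`, and `T n n = n`:
the cycle set `(ℕ, ⋆)` is non-degenerate and square-free. -/
theorem T_injective_range_squarefree (n : ℕ) :
    Function.Injective (T n) ∧ Set.range (T n) = {k : ℕ | k ≠ n + 1} ∧ T n n = n :=
  ⟨(T.strictMono n).injective, T.range_eq n, T.self n⟩
end

section
/- Let D = {(i, j) : ℕ × ℕ | j ≠ i + 1} and let R : ℕ × ℕ → ℕ × ℕ be defined by R (i, j) = (σ i j, γ j i). Then R maps D into D, R is a bijection of D onto D, and R ∘ R is the identity on D (i.e. Set.BijOn R D D and R (R p) = p for every p ∈ D). In particular the partial map r of the Thompson partial solution is an involutive bijection of its domain D onto its range D. -/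
/-!
On `D`, `R` fixes the diagonal and swaps `(i, j)` with `(j, i + 1)` for `j < i`; the second
pair lies above the diagonal by at least two, which is exactly the rest of `D`.
-/

/-- `σ n k = k` if `k ≤ n`, `k - 1` otherwise. -/
def sigma' (n k : ℕ) : ℕ := if k ≤ n then k else k - 1

/-- `γ n k = k` if `k ≤ n`, `k + 1` otherwise. -/
def gamma' (n k : ℕ) : ℕ := if k ≤ n then k else k + 1

/-- The domain `D = {(i, j) | j ≠ i + 1}` of the Thompson partial braiding. -/
def D : Set (ℕ × ℕ) := {p | p.2 ≠ p.1 + 1}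

/-- The Thompson partial braiding `R (i, j) = (σ i j, γ j i)`. -/
def R (p : ℕ × ℕ) : ℕ × ℕ := (sigma' p.1 p.2, gamma' p.2 p.1)

lemma R_self (i : ℕ) : R (i, i) = (i, i) := by
  simp [R, sigma', gamma']

lemma R_of_lt {i j : ℕ} (h : j < i) : R (i, j) = (j, i + 1) := by
  simp [R, sigma', gamma', h.le, h.not_ge]

lemma R_of_add_two_le {i j : ℕ} (h : i + 2 ≤ j) : R (i, j) = (j - 1, i) := by
  simp only [R, sigma', gamma', Prod.mk.injEq]
  constructor <;> split_ifs <;> omega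

lemma mem_D_iff_trichotomy {i j : ℕ} :
    (i, j) ∈ D ↔ j < i ∨ j = i ∨ i + 2 ≤ j := by
  simp only [D, Set.mem_ofPred_eq]
  omega

lemma R_mapsTo : Set.MapsTo R D D := by
  rintro ⟨i, j⟩ h
  rcases mem_D_iff_trichotomy.mp h with h | rfl | h
  · rw [R_of_lt h, mem_D_iff_trichotomy]; omega
  · rwa [R_self]
  · rw [R_of_add_two_le h, mem_D_iff_trichotomy]; omega

lemma R_invOn : Set.InvOn R R D D := by
  suffices h : Set.LeftInvOn R R D from ⟨h, h⟩
  rintro ⟨i, j⟩ h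
  rcases mem_D_iff_trichotomy.mp h with h | rfl | h
  · rw [R_of_lt h, R_of_add_two_le (by omega), Nat.add_sub_cancel]
  · rw [R_self, R_self]
  · rw [R_of_add_two_le h, R_of_lt (by omega), Nat.sub_add_cancel (by omega)]

/-- `R` is a bijection of `D` onto `D` and is an involution on `D`. -/
theorem R_bijOn_involutive :
    Set.BijOn R D D ∧ ∀ p ∈ D, R (R p) = p :=
  ⟨R_invOn.bijOn R_mapsTo R_mapsTo, fun _ hp => R_invOn.1 hp⟩
end

section
/- For all natural numbers m, n, k such that all partial maps involved are defined, namely: k ≠ n + 1, n ≠ m + 1, σ n k ≠ m + 1, k ≠ γ n m + 1, and σ (γ n m) k ≠ σ m n + 1, it holds that σ m (σ n k) = σ (σ m n) (σ (γ n m) k). This is the first braided identity σ_x ∘ σ_y = σ_{σ_x(y)} ∘ σ_{γ_y(x)} (with x = m, y = n) for the Thompson partial solution, valid wherever both sides are defined. -/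
/-!
`sigma' n` is the monotone surjection `ℕ → ℕ` identifying `n` and `n + 1`, i.e. a codegeneracy,
so the braided identity is an instance of the simplicial identity `σ_j ∘ σ_i = σ_i ∘ σ_{j+1}`
for `i ≤ j`: with `(i, j) = (n, m)` when `n < m`, and with `(i, j) = (m, n - 1)` when `m + 1 < n`.
-/

theorem sigma'_of_le {n k : ℕ} (h : k ≤ n) : sigma' n k = k := if_pos h

theorem sigma'_of_lt {n k : ℕ} (h : n < k) : sigma' n k = k - 1 := if_neg (Nat.not_le.2 h)

theorem gamma'_of_le {n k : ℕ} (h : k ≤ n) : gamma' n k = k := if_pos h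

theorem gamma'_of_lt {n k : ℕ} (h : n < k) : gamma' n k = k + 1 := if_neg (Nat.not_le.2 h)

theorem sigma'_sigma'_of_le {i j : ℕ} (h : i ≤ j) (k : ℕ) :
    sigma' j (sigma' i k) = sigma' i (sigma' (j + 1) k) := by
  unfold sigma'
  split_ifs <;> omega

theorem braided_first_general (m n k : ℕ)
    (h2 : n ≠ m + 1) :
    sigma' m (sigma' n k) = sigma' (sigma' m n) (sigma' (gamma' n m) k) := by
  rcases lt_trichotomy n m with hnm | rfl | hmn
  · rw [sigma'_of_le hnm.le, gamma'_of_lt hnm]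
    exact sigma'_sigma'_of_le hnm.le k
  · rw [sigma'_of_le le_rfl, gamma'_of_le le_rfl]
  · obtain ⟨j, rfl⟩ : ∃ j, n = j + 1 := ⟨n - 1, by omega⟩
    rw [sigma'_of_lt hmn, gamma'_of_le hmn.le, Nat.add_sub_cancel]
    exact (sigma'_sigma'_of_le (by omega) k).symm

/-- First braided identity `σ_x ∘ σ_y = σ_{σ_x(y)} ∘ σ_{γ_y(x)}` (with `x = m`, `y = n`),
valid wherever both sides are defined. -/
theorem braided_first (m n k : ℕ)
    (h1 : k ≠ n + 1) (h2 : n ≠ m + 1) (h3 : sigma' n k ≠ m + 1)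
    (h4 : k ≠ gamma' n m + 1) (h5 : sigma' (gamma' n m) k ≠ sigma' m n + 1) :
    sigma' m (sigma' n k) = sigma' (sigma' m n) (sigma' (gamma' n m) k) :=
  braided_first_general m n k h2
end

section
/- For all natural numbers m, i, j with m ≤ i, m ≤ j and j ≠ i + 1, one has m ≤ σ i j and m ≤ γ j i. Consequently, for every m the set Y_m = {k : ℕ | m ≤ k} is an invariant subset of the Thompson partial solution (r maps Y_m × Y_m into Y_m × Y_m wherever it is defined), and the solution decomposes as the disjoint union of the invariant subsets {0} and Y_1; in particular it is decomposable. -/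
-- `σ n` lowers `k` only when `n < k`, and then only to `k - 1 ≥ n`.
theorem min_le_sigma' (n k : ℕ) : min n k ≤ sigma' n k := by
  unfold sigma'
  split_ifs <;> omega

theorem le_gamma' (n k : ℕ) : k ≤ gamma' n k := by
  unfold gamma'
  split_ifs <;> omega

theorem Ym_invariant_general (m i j : ℕ) (hi : m ≤ i) (hj : m ≤ j) :
    m ≤ sigma' i j ∧ m ≤ gamma' j i :=
  ⟨(le_min hi hj).trans (min_le_sigma' i j), hi.trans (le_gamma' j i)⟩

/-- For all `m ≤ i`, `m ≤ j` with `j ≠ i + 1`, both components of `r(x_i, x_j)` stay `≥ m`: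
each `Y_m = {k | m ≤ k}` is an invariant subset, so the Thompson partial solution
decomposes as `{0} ∪ Y_1` and is decomposable. -/
theorem Ym_invariant (m i j : ℕ) (hi : m ≤ i) (hj : m ≤ j) (h : j ≠ i + 1) :
    m ≤ sigma' i j ∧ m ≤ gamma' j i :=
  Ym_invariant_general m i j hi hj
end
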